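/- A function u* : Ω → ℝ is a local minimizer of the discrete Potts functional P_γ (i.e., there is ε > 0 such that P_γ(v) ≥ P_γ(u*) for all v with ‖v − u*‖₂ < ε) if and only if u* minimizes the quadratic functional v ↦ ‖Av − f‖₂² over the pattern subspace V(u*). -/

import Mathlib

open Finset

/-- The discrete image domain `Ω = {0,…,M−1} × {0,…,N−1} ⊆ ℤ²`. -/
noncomputable def gridDomain (M N : ℕ) : Finset (ℤ × ℤ) :=
  (Finset.Ico (0 : ℤ) (M : ℤ)) ×ˢ (Finset.Ico (0 : ℤ) (N : ℤ))

/-- Pixels of the image domain. -/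
abbrev Pix (M N : ℕ) := {p : ℤ × ℤ // p ∈ gridDomain M N}

/-- `‖∇_a u‖₀`: the number of pixels `p ∈ Ω` with `p + a ∈ Ω` and `u (p + a) ≠ u p`. -/
noncomputable def jumpCount (M N : ℕ) (u : Pix M N → ℝ) (a : ℤ × ℤ) : ℕ :=
  Set.ncard {p : Pix M N |
    ∃ h : (p : ℤ × ℤ) + a ∈ gridDomain M N, u ⟨(p : ℤ × ℤ) + a, h⟩ ≠ u p}

/-- The pattern subspace `V(u*)`: functions `v` that are constant wherever `u*` is
constant. -/
def patternSubspace (M N S : ℕ) (a : Fin S → ℤ × ℤ) (ustar : Pix M N → ℝ) :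
    Set (Pix M N → ℝ) :=
  {v | ∀ (s : Fin S) (p : Pix M N) (hq : (p : ℤ × ℤ) + a s ∈ gridDomain M N),
    ustar ⟨(p : ℤ × ℤ) + a s, hq⟩ = ustar p → v ⟨(p : ℤ × ℤ) + a s, hq⟩ = v p}

/-- The discrete Potts functional `P_γ(u) = ‖Au − f‖₂² + γ Σ_s ω_s‖∇_{a_s}u‖₀`. -/
noncomputable def pottsFunctional (M N m S : ℕ) (a : Fin S → ℤ × ℤ) (ω : Fin S → ℝ)
    (A : (Pix M N → ℝ) →ₗ[ℝ] (Fin m → ℝ)) (f : Fin m → ℝ) (γ : ℝ)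
    (u : Pix M N → ℝ) : ℝ :=
  (∑ i, (A u i - f i) ^ 2) + γ * ∑ s, ω s * (jumpCount M N u (a s) : ℝ)


/-!
Every jump of `u*` persists in all functions close to `u*`, and the functions all of whose jumps
are jumps of `u*` form the pattern subspace `V(u*)`. Hence near `u*` the jump penalty is constant
on `V(u*)` and exceeds its value at `u*` by at least `γ · min ω` off `V(u*)`, a gap that the
continuous data term cannot close nearby. So `u*` is a local minimizer of `P_γ` iff it is a local
minimizer of the data term on `V(u*)`, and since the data term and `V(u*)` are convex, local and
global minimality on `V(u*)` coincide.
-/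

open Set Filter Topology

theorem convexOn_finset_sum {ι E : Type*} [AddCommMonoid E] [Module ℝ E] {s : Set E}
    (hs : Convex ℝ s) (t : Finset ι) {g : ι → E → ℝ} (hg : ∀ i ∈ t, ConvexOn ℝ s (g i)) :
    ConvexOn ℝ s fun x => ∑ i ∈ t, g i x := by
  classical
  induction t using Finset.induction_on with
  | empty => simpa using convexOn_const 0 hs
  | insert i t hi ih =>
    simp only [Finset.sum_insert hi]
    exact (hg i (t.mem_insert_self i)).add (ih fun j hj => hg j (Finset.mem_insert_of_mem hj))

theorem convexOn_sub_sq {E : Type*} [AddCommGroup E] [Module ℝ E] (ℓ : E →ₗ[ℝ] ℝ) (c : ℝ) :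
    ConvexOn ℝ univ fun x => (ℓ x - c) ^ 2 := by
  have := ((Even.convexOn_pow (𝕜 := ℝ) even_two).translate_right (-c)).comp_linearMap ℓ
  simpa [Function.comp_def, sub_eq_neg_add] using this

theorem exists_pos_forall_le {ι : Type*} [Finite ι] {ω : ι → ℝ} (hω : ∀ i, 0 < ω i) :
    ∃ c > 0, ∀ i, c ≤ ω i := by
  have hsmall : ∀ᶠ c in 𝓝[>] (0 : ℝ), ∀ i, c ≤ ω i :=
    eventually_all.2 fun i => nhdsWithin_le_nhds (eventually_le_nhds (hω i))
  obtain ⟨c, hcω, hc⟩ := (hsmall.and self_mem_nhdsWithin).exists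
  exact ⟨c, hc, hcω⟩

theorem eventually_nhds_iff_exists_sum_sq_lt {ι : Type*} [Fintype ι] {u : ι → ℝ}
    {q : (ι → ℝ) → Prop} :
    (∀ᶠ v in 𝓝 u, q v) ↔ ∃ ε > 0, ∀ v, ∑ i, (v i - u i) ^ 2 < ε ^ 2 → q v := by
  constructor
  · intro h
    obtain ⟨ε, hε, hball⟩ := Metric.eventually_nhds_iff.1 h
    refine ⟨ε, hε, fun v hv => hball ((dist_pi_lt_iff hε).2 fun i => ?_)⟩
    have hi : (v i - u i) ^ 2 ≤ ∑ j, (v j - u j) ^ 2 :=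
      Finset.single_le_sum (fun j _ => sq_nonneg (v j - u j)) (Finset.mem_univ i)
    exact (Real.dist_eq _ _).trans_lt (abs_lt_of_sq_lt_sq (hi.trans_lt hv) hε.le)
  · rintro ⟨ε, hε, h⟩
    have hopen : IsOpen {v : ι → ℝ | ∑ i, (v i - u i) ^ 2 < ε ^ 2} :=
      isOpen_lt (by fun_prop) continuous_const
    exact mem_of_superset (hopen.mem_nhds (by simpa using pow_pos hε 2)) h

theorem sum_mul_add_le_sum_mul {ι : Type*} [Fintype ι] {ω x y : ι → ℝ} (hω : ∀ i, 0 ≤ ω i)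
    (hxy : ∀ i, x i ≤ y i) {j : ι} (hj : x j + 1 ≤ y j) :
    ∑ i, ω i * x i + ω j ≤ ∑ i, ω i * y i :=
  calc ∑ i, ω i * x i + ω j
      ≤ ∑ i, ω i * x i + ω j * (y j - x j) := by
        gcongr
        exact le_mul_of_one_le_right (hω j) (by linarith)
    _ ≤ ∑ i, ω i * x i + ∑ i, ω i * (y i - x i) := by
        gcongr
        exact Finset.single_le_sum (f := fun i => ω i * (y i - x i))
          (fun i _ => mul_nonneg (hω i) (sub_nonneg.2 (hxy i))) (Finset.mem_univ j)
    _ = ∑ i, ω i * y i := by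
        rw [← Finset.sum_add_distrib]
        exact Finset.sum_congr rfl fun i _ => by ring

theorem IsLocalMin.isMinOn_of_convexOn {E : Type*} [AddCommGroup E] [TopologicalSpace E]
    [Module ℝ E] [IsTopologicalAddGroup E] [ContinuousSMul ℝ E] {Q J : E → ℝ} {V : Set E} {u : E}
    (h : IsLocalMin (Q + J) u) (hu : u ∈ V) (hQ : ConvexOn ℝ V Q) (hJ : ∀ v ∈ V, J v ≤ J u) :
    IsMinOn Q V u := by
  refine IsMinOn.of_isLocalMinOn_of_convexOn hu ?_ hQ
  filter_upwards [nhdsWithin_le_nhds h, self_mem_nhdsWithin] with v hv hvV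
  linarith [hJ v hvV, show Q u + J u ≤ Q v + J v from hv]

theorem IsMinOn.isLocalMin_add {X : Type*} [TopologicalSpace X] {Q J : X → ℝ} {V : Set X}
    {u : X} {c : ℝ} (hmin : IsMinOn Q V u) (hQ : ContinuousAt Q u) (hc : 0 < c)
    (hJV : ∀ᶠ v in 𝓝 u, v ∈ V → J v = J u) (hJc : ∀ᶠ v in 𝓝 u, v ∉ V → J u + c ≤ J v) :
    IsLocalMin (Q + J) u := by
  have hQc : ∀ᶠ v in 𝓝 u, Q u - c < Q v := hQ.eventually (eventually_gt_nhds (by linarith))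
  filter_upwards [hQc, hJV, hJc] with v hQv hJVv hJcv
  show Q u + J u ≤ Q v + J v
  by_cases hv : v ∈ V
  · linarith [hJVv hv, isMinOn_iff.1 hmin v hv]
  · linarith [hJcv hv]

section DataFidelity

variable {E ι : Type*} [AddCommGroup E] [Module ℝ E] [Fintype ι] (A : E →ₗ[ℝ] ι → ℝ) (f : ι → ℝ)

def dataFidelity (u : E) : ℝ :=
  ∑ i, (A u i - f i) ^ 2

theorem convexOn_dataFidelity : ConvexOn ℝ univ (dataFidelity A f) :=
  convexOn_finset_sum convex_univ _ fun i _ => convexOn_sub_sq (LinearMap.proj i ∘ₗ A) (f i)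

theorem continuous_dataFidelity [TopologicalSpace E] [IsTopologicalAddGroup E]
    [ContinuousSMul ℝ E] [T2Space E] [FiniteDimensional ℝ E] : Continuous (dataFidelity A f) := by
  have := A.continuous_of_finiteDimensional
  unfold dataFidelity
  fun_prop

end DataFidelity

section Potts

variable {M N S : ℕ}

def jumpSet (M N : ℕ) (u : Pix M N → ℝ) (b : ℤ × ℤ) : Set (Pix M N) :=
  {p | ∃ h : (p : ℤ × ℤ) + b ∈ gridDomain M N, u ⟨(p : ℤ × ℤ) + b, h⟩ ≠ u p}

theorem jumpCount_le_jumpCount {u v : Pix M N → ℝ} {b : ℤ × ℤ}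
    (h : jumpSet M N u b ⊆ jumpSet M N v b) : jumpCount M N u b ≤ jumpCount M N v b :=
  Set.ncard_le_ncard h (Set.toFinite _)

theorem jumpCount_lt_jumpCount {u v : Pix M N → ℝ} {b : ℤ × ℤ}
    (h : jumpSet M N u b ⊂ jumpSet M N v b) : jumpCount M N u b < jumpCount M N v b :=
  Set.ncard_lt_ncard h (Set.toFinite _)

theorem eventually_jumpSet_subset (u : Pix M N → ℝ) (b : ℤ × ℤ) :
    ∀ᶠ v in 𝓝 u, jumpSet M N u b ⊆ jumpSet M N v b := by
  have hpair : ∀ p : Pix M N, ∀ᶠ v in 𝓝 u, p ∈ jumpSet M N u b → p ∈ jumpSet M N v b := by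
    intro p
    by_cases hp : p ∈ jumpSet M N u b
    · obtain ⟨h, hne⟩ := hp
      have hcont : Continuous fun v : Pix M N → ℝ => v ⟨(p : ℤ × ℤ) + b, h⟩ - v p := by fun_prop
      filter_upwards [hcont.continuousAt.eventually_ne (sub_ne_zero.2 hne)] with v hv _
      exact ⟨h, sub_ne_zero.1 hv⟩
    · exact Eventually.of_forall fun _ hp' => absurd hp' hp
  filter_upwards [eventually_all.2 hpair] with v hv p using hv p

variable (a : Fin S → ℤ × ℤ)

theorem mem_patternSubspace_iff {u v : Pix M N → ℝ} :
    v ∈ patternSubspace M N S a u ↔ ∀ s, jumpSet M N v (a s) ⊆ jumpSet M N u (a s) := by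
  constructor
  · rintro hv s p ⟨h, hne⟩
    exact ⟨h, mt (hv s p h) hne⟩
  · intro hv s p h heq
    by_contra hne
    obtain ⟨_, hne'⟩ := hv s ⟨h, hne⟩
    exact hne' heq

theorem mem_patternSubspace_self (u : Pix M N → ℝ) : u ∈ patternSubspace M N S a u :=
  fun _ _ _ heq => heq

theorem convex_patternSubspace (u : Pix M N → ℝ) : Convex ℝ (patternSubspace M N S a u) := by
  intro v hv w hw α β _ _ _ s p h heq
  simp only [Pi.add_apply, Pi.smul_apply, smul_eq_mul, hv s p h heq, hw s p h heq]

variable (ω : Fin S → ℝ) (γ : ℝ)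

noncomputable def pottsPenalty (u : Pix M N → ℝ) : ℝ :=
  γ * ∑ s, ω s * (jumpCount M N u (a s) : ℝ)

theorem pottsPenalty_le_of_mem_patternSubspace (hω : ∀ s, 0 ≤ ω s) (hγ : 0 ≤ γ)
    {u v : Pix M N → ℝ} (hv : v ∈ patternSubspace M N S a u) :
    pottsPenalty a ω γ v ≤ pottsPenalty a ω γ u := by
  unfold pottsPenalty
  gcongr with s
  · exact hω s
  · exact jumpCount_le_jumpCount ((mem_patternSubspace_iff a).1 hv s)

theorem eventually_pottsPenalty_eq (u : Pix M N → ℝ) :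
    ∀ᶠ v in 𝓝 u, v ∈ patternSubspace M N S a u → pottsPenalty a ω γ v = pottsPenalty a ω γ u := by
  filter_upwards [eventually_all.2 fun s => eventually_jumpSet_subset u (a s)] with v hsub hv
  have hcount : ∀ s, jumpCount M N v (a s) = jumpCount M N u (a s) := fun s =>
    (jumpCount_le_jumpCount ((mem_patternSubspace_iff a).1 hv s)).antisymm
      (jumpCount_le_jumpCount (hsub s))
  simp only [pottsPenalty, hcount]

theorem exists_eventually_pottsPenalty_add_le (hω : ∀ s, 0 < ω s) (hγ : 0 < γ)
    (u : Pix M N → ℝ) : ∃ c > 0, ∀ᶠ v in 𝓝 u,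
      v ∉ patternSubspace M N S a u → pottsPenalty a ω γ u + c ≤ pottsPenalty a ω γ v := by
  obtain ⟨c, hc, hcω⟩ := exists_pos_forall_le hω
  refine ⟨γ * c, mul_pos hγ hc, ?_⟩
  filter_upwards [eventually_all.2 fun s => eventually_jumpSet_subset u (a s)] with v hsub hv
  obtain ⟨s, hs⟩ : ∃ s, ¬ jumpSet M N v (a s) ⊆ jumpSet M N u (a s) := by
    simpa [mem_patternSubspace_iff] using hv
  have hlt : (jumpCount M N u (a s) : ℝ) + 1 ≤ jumpCount M N v (a s) := by
    exact_mod_cast jumpCount_lt_jumpCount (ssubset_of_subset_not_subset (hsub s) hs)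
  have hsum := sum_mul_add_le_sum_mul (fun t => (hω t).le)
    (fun t => Nat.cast_le.2 (jumpCount_le_jumpCount (hsub t))) hlt
  have hscaled := mul_le_mul_of_nonneg_left ((add_le_add_right (hcω s) _).trans hsum) hγ.le
  unfold pottsPenalty
  linarith

end Potts

theorem local_min_potts_iff_general (M N m S : ℕ)
    (a : Fin S → ℤ × ℤ)
    (ω : Fin S → ℝ) (hω : ∀ s, 0 < ω s)
    (A : (Pix M N → ℝ) →ₗ[ℝ] (Fin m → ℝ)) (f : Fin m → ℝ)
    (γ : ℝ) (hγ : 0 < γ)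
    (ustar : Pix M N → ℝ) :
    (∃ ε > (0 : ℝ), ∀ v : Pix M N → ℝ,
        (∑ p, (v p - ustar p) ^ 2) < ε ^ 2 →
          pottsFunctional M N m S a ω A f γ ustar ≤ pottsFunctional M N m S a ω A f γ v)
      ↔ (∀ v ∈ patternSubspace M N S a ustar,
          (∑ i, (A ustar i - f i) ^ 2) ≤ ∑ i, (A v i - f i) ^ 2) := by
  rw [← eventually_nhds_iff_exists_sum_sq_lt]
  change IsLocalMin (dataFidelity A f + pottsPenalty a ω γ) ustar ↔
    IsMinOn (dataFidelity A f) (patternSubspace M N S a ustar) ustar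
  constructor
  · intro hloc
    exact hloc.isMinOn_of_convexOn (mem_patternSubspace_self a ustar)
      ((convexOn_dataFidelity A f).subset (subset_univ _) (convex_patternSubspace a ustar))
      fun v hv => pottsPenalty_le_of_mem_patternSubspace a ω γ (fun s => (hω s).le) hγ.le hv
  · intro hmin
    obtain ⟨c, hc, hgap⟩ := exists_eventually_pottsPenalty_add_le a ω γ hω hγ ustar
    exact hmin.isLocalMin_add (continuous_dataFidelity A f).continuousAt hc
      (eventually_pottsPenalty_eq a ω γ ustar) hgap

/-- `u*` is a local minimizer of the discrete Potts functional `P_γ` if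
and only if `u*` minimizes `v ↦ ‖Av − f‖₂²` over the pattern subspace `V(u*)`. -/
theorem local_min_potts_iff (M N m S : ℕ)
    (hM : 1 ≤ M) (hN : 1 ≤ N) (hS : 1 ≤ S)
    (a : Fin S → ℤ × ℤ) (ha : ∀ s, a s ≠ 0)
    (ω : Fin S → ℝ) (hω : ∀ s, 0 < ω s)
    (A : (Pix M N → ℝ) →ₗ[ℝ] (Fin m → ℝ)) (f : Fin m → ℝ)
    (γ : ℝ) (hγ : 0 < γ)
    (ustar : Pix M N → ℝ) :
    (∃ ε > (0 : ℝ), ∀ v : Pix M N → ℝ,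
        (∑ p, (v p - ustar p) ^ 2) < ε ^ 2 →
          pottsFunctional M N m S a ω A f γ ustar ≤ pottsFunctional M N m S a ω A f γ v)
      ↔ (∀ v ∈ patternSubspace M N S a ustar,
          (∑ i, (A ustar i - f i) ^ 2) ≤ ∑ i, (A v i - f i) ^ 2) :=
  local_min_potts_iff_general M N m S a ω hω A f γ hγ ustar
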